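/- Let A = ⊕_k A^k be a graded commutative algebra with a Schouten bracket [[·,·]] (graded Poisson of degree −1), and let Φ be an element acting as a degree −1 derivation i_Φ of A with i_Φ ∘ i_Φ = 0. Define, with x = |X| − 1 the shifted degree, [[X,Y]]_Φ = [[X,Y]] + x X ∧ i_Φ Y − (−1)^x y (i_Φ X) ∧ Y. Then [[·,·]]_Φ satisfies the generalized Leibniz rule [[X, Y∧Z]]_Φ = [[X,Y]]_Φ ∧ Z + (−1)^{x(y+1)} Y ∧ [[X,Z]]_Φ − [[X,1]]_Φ ∧ Y ∧ Z, where [[X,1]]_Φ = (−1)^x i_Φ X. -/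
import Mathlib


/-- The Schouten–Jacobi deformation `[[X,Y]]_Φ = [[X,Y]] + x X∧i_ΦY − (−1)^x y (i_ΦX)∧Y`
of a Schouten bracket by a degree `−1` derivation `i_Φ`, for `X` of degree `m`
and `Y` of degree `n` (shifted degrees `x = m−1`, `y = n−1`). -/
def brPhi {R : Type*} [CommRing R] (br : R → R → R) (iΦ : R → R)
    (m n : ℤ) (X Y : R) : R :=
  br X Y + (m - 1) • (X * iΦ Y)
    - (((-1 : Rˣ) ^ (m - 1) : Rˣ) : R) * ((n - 1) • (iΦ X * Y))

section aux
variable {R : Type*} [CommRing R]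

private lemma e_mul' (a b : ℤ) :
    (((-1 : Rˣ) ^ a : Rˣ) : R) * (((-1 : Rˣ) ^ b : Rˣ) : R)
      = (((-1 : Rˣ) ^ (a + b) : Rˣ) : R) := by
  rw [← Units.val_mul, ← zpow_add]

private lemma e_two' (a : ℤ) : (((-1 : Rˣ) ^ (2 * a) : Rˣ) : R) = 1 := by
  have h2 : ((-1 : Rˣ)) ^ (2 : ℤ) = 1 := by
    rw [show (2 : ℤ) = ((2 : ℕ) : ℤ) from rfl, zpow_natCast, neg_one_sq]
  rw [zpow_mul, h2, one_zpow, Units.val_one]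

end aux

/-- The deformed bracket `[[·,·]]_Φ` of a Schouten bracket (odd graded Poisson
bracket of degree `−1`) on a graded commutative algebra by a degree `−1`
derivation `i_Φ` with `i_Φ ∘ i_Φ = 0` satisfies the generalized Leibniz rule
`[[X, Y∧Z]]_Φ = [[X,Y]]_Φ∧Z + (−1)^{x(y+1)} Y∧[[X,Z]]_Φ − [[X,1]]_Φ∧Y∧Z`,
where moreover `[[X,1]]_Φ = (−1)^x i_ΦX`. -/
theorem deformed_bracket_generalized_leibniz {R : Type*} [CommRing R] [Algebra ℝ R]
    (𝒜 : ℤ → Submodule ℝ R) [GradedAlgebra 𝒜]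
    (br : R → R → R) (iΦ : R → R)
    (hcomm : ∀ (m n : ℤ) (X Y : R), X ∈ 𝒜 m → Y ∈ 𝒜 n →
      X * Y = (((-1 : Rˣ) ^ (m * n) : Rˣ) : R) * (Y * X))
    (hbrleib : ∀ (m n : ℤ) (X Y : R), X ∈ 𝒜 m → Y ∈ 𝒜 n → ∀ Z : R,
      br X (Y * Z) = br X Y * Z + (((-1 : Rˣ) ^ ((m - 1) * n) : Rˣ) : R) * (Y * br X Z))
    (hbranti : ∀ (m n : ℤ) (X Y : R), X ∈ 𝒜 m → Y ∈ 𝒜 n →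
      br X Y = -((((-1 : Rˣ) ^ ((m - 1) * (n - 1)) : Rˣ) : R) * br Y X))
    (hiΦder : ∀ (n : ℤ) (Y : R), Y ∈ 𝒜 n → ∀ Z : R,
      iΦ (Y * Z) = iΦ Y * Z + (((-1 : Rˣ) ^ n : Rˣ) : R) * (Y * iΦ Z))
    (hiΦdeg : ∀ (n : ℤ) (Y : R), Y ∈ 𝒜 n → iΦ Y ∈ 𝒜 (n - 1))
    (hiΦ2 : ∀ X : R, iΦ (iΦ X) = 0) :
    (∀ (m n p : ℤ) (X Y Z : R), X ∈ 𝒜 m → Y ∈ 𝒜 n → Z ∈ 𝒜 p →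
      brPhi br iΦ m (n + p) X (Y * Z)
        = brPhi br iΦ m n X Y * Z
          + (((-1 : Rˣ) ^ ((m - 1) * n) : Rˣ) : R) * (Y * brPhi br iΦ m p X Z)
          - brPhi br iΦ m 0 X 1 * (Y * Z)) ∧
    (∀ (m : ℤ) (X : R), X ∈ 𝒜 m →
      brPhi br iΦ m 0 X 1 = (((-1 : Rˣ) ^ (m - 1) : Rˣ) : R) * iΦ X) := by
  have hone : (1 : R) ∈ 𝒜 0 := SetLike.one_mem_graded 𝒜
  have hiΦ1 : iΦ (1 : R) = 0 := by
    have h := hiΦder 0 1 hone 1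
    simp at h
    exact h
  have hbr1 : ∀ (m : ℤ) (X : R), X ∈ 𝒜 m → br X 1 = 0 := by
    intro m X hX
    have h := hbrleib m 0 X 1 hX hone 1
    simp at h
    exact h
  refine ⟨?_, ?_⟩
  · intro m n p X Y Z hX hY hZ
    have hc1 := hcomm m n X Y hX hY
    have hc2 := hcomm (m - 1) n (iΦ X) Y (hiΦdeg m X hX) hY
    have hs1 : (((-1 : Rˣ) ^ n : Rˣ) : R) * (((-1 : Rˣ) ^ (m * n) : Rˣ) : R)
        = (((-1 : Rˣ) ^ ((m - 1) * n) : Rˣ) : R) := by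
      rw [e_mul', show n + m * n = (m - 1) * n + 2 * n by ring, ← e_mul', e_two', mul_one]
    simp only [brPhi, hbrleib m n X Y hX hY Z, hiΦder n Y hY Z, hbr1 m X hX, hiΦ1,
      zsmul_eq_mul]
    push_cast
    linear_combination (((m : R) - 1) * iΦ Z * (((-1 : Rˣ) ^ n : Rˣ) : R)) * hc1
      + (((m : R) - 1) * (Y * X * iΦ Z)) * hs1
      - ((((-1 : Rˣ) ^ (m - 1) : Rˣ) : R) * ((p : R) - 1) * Z) * hc2
  · intro m X hX
    simp only [brPhi, hbr1 m X hX, hiΦ1, mul_zero, zsmul_eq_mul]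
    push_cast
    ring
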